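/- arXiv:1301.6328 — 8 statements merged into one kernel-verified Lean document; each statement's English description precedes it below -/
import Mathlib

section
/- Let G be a finite group and G i (i : Fin n) a family of subgroups. For every A : Finset (Fin n), the projection of the quasi-uniform code onto the coordinates in A satisfies Nat.card (Set.range (fun g : G => fun i : A => (QuotientGroup.mk g : G ⧸ G (↑i)))) = (⨅ i ∈ A, G i).index. -/
/-!
The codewords form the `G`-orbit of the tuple of trivial cosets `(H i)ᵢ` in `Π i, G ⧸ H i`,
and the stabilizer of that tuple is `⨅ i, H i`; by the orbit-stabilizer theorem the code is in
bijection with `G ⧸ ⨅ i, H i`.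
-/

open MulAction

section

variable {G ι : Type*} [Group G] (H : ι → Subgroup G)

theorem MulAction.stabilizer_pi_quotient_one :
    stabilizer G (fun i => ((1 : G) : G ⧸ H i)) = ⨅ i, H i := by
  ext g
  simp [funext_iff, QuotientGroup.eq]

theorem MulAction.orbit_pi_quotient_one :
    orbit G (fun i => ((1 : G) : G ⧸ H i)) = Set.range fun g : G => fun i => (g : G ⧸ H i) := by
  ext x
  simp [mem_orbit_iff, funext_iff]

theorem Subgroup.index_iInf_eq_card_range_quotientMk :
    (⨅ i, H i).index = Nat.card (Set.range fun g : G => fun i => (g : G ⧸ H i)) := by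
  rw [← stabilizer_pi_quotient_one, index_stabilizer, orbit_pi_quotient_one, Nat.card_coe_set_eq]

end

theorem stmt_2_general {G : Type*} [Group G] {n : ℕ} (Gs : Fin n → Subgroup G)
    (A : Finset (Fin n)) :
    Nat.card (Set.range (fun g : G => fun i : A => (QuotientGroup.mk g : G ⧸ Gs (↑i))))
      = (⨅ i ∈ A, Gs i).index := by
  rw [iInf_subtype', Subgroup.index_iInf_eq_card_range_quotientMk]

theorem stmt_2 {G : Type*} [Group G] [Finite G] {n : ℕ} (Gs : Fin n → Subgroup G)
    (A : Finset (Fin n)) :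
    Nat.card (Set.range (fun g : G => fun i : A => (QuotientGroup.mk g : G ⧸ Gs (↑i))))
      = (⨅ i ∈ A, Gs i).index :=
  stmt_2_general Gs A
end

section
/- Let G be a finite nontrivial commutative group and G i (i : Fin n) a family of subgroups with ⨅ i, G i = ⊥. Then the minimum Hamming distance of the quasi-uniform code C = Set.range φ, namely sInf {d : ℕ | ∃ g g' : G, φ g ≠ φ g' ∧ hammingDist (φ g) (φ g') = d}, equals n - sSup {A.card | A : Finset (Fin n), ∃ g : G, g ≠ 1 ∧ ∀ i ∈ A, g ∈ G i}. -/
/-!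
The codewords of `g` and `g'` agree exactly at the coordinates `i` with `g⁻¹ * g' ∈ G i`, so their
distance is `n` minus the number of subgroups containing `g⁻¹ * g'`. As `⨅ i, G i = ⊥`, distinct
codewords correspond to `g⁻¹ * g' ≠ 1`, and minimizing the distance means maximizing the number of
subgroups containing a nontrivial element, which is the largest `A` with `⨅ i ∈ A, G i ≠ ⊥`.
-/

attribute [local instance] Classical.propDecidable

open Finset

section CosetCode

variable {G ι : Type*} [Group G] (Gs : ι → Subgroup G)

theorem mk_injective_of_iInf_eq_bot (h : ⨅ i, Gs i = ⊥) :
    Function.Injective (fun g : G => fun i => (g : G ⧸ Gs i)) := by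
  intro g g' hgg'
  have hmem : g⁻¹ * g' ∈ ⨅ i, Gs i :=
    Subgroup.mem_iInf.2 fun i => QuotientGroup.eq.1 (congrFun hgg' i)
  rw [h, Subgroup.mem_bot, inv_mul_eq_one] at hmem
  exact hmem

variable [Fintype ι]

noncomputable def indicesContaining (x : G) : Finset ι := {i | x ∈ Gs i}

theorem hammingDist_mk_mk (g g' : G) :
    hammingDist (fun i => (g : G ⧸ Gs i)) (fun i => (g' : G ⧸ Gs i)) =
      Fintype.card ι - #(indicesContaining Gs (g⁻¹ * g')) := by
  have hdist : hammingDist (fun i => (g : G ⧸ Gs i)) (fun i => (g' : G ⧸ Gs i)) =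
      #{i | g⁻¹ * g' ∉ Gs i} := by
    simp only [hammingDist, ne_eq, QuotientGroup.eq]
  rw [hdist, indicesContaining, ← card_univ,
    ← card_filter_add_card_filter_not (s := univ) (p := fun i => g⁻¹ * g' ∈ Gs i)]
  omega

theorem card_indicesContaining_mem {x : G} (hx : x ≠ 1) :
    #(indicesContaining Gs x) ∈
      {c : ℕ | ∃ A : Finset ι, (∃ g : G, g ≠ 1 ∧ ∀ i ∈ A, g ∈ Gs i) ∧ A.card = c} :=
  ⟨_, ⟨x, hx, fun _ hi => (mem_filter.1 hi).2⟩, rfl⟩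

theorem exists_isGreatest_card_indicesContaining [Nontrivial G] :
    ∃ x : G, x ≠ 1 ∧ IsGreatest
      {c : ℕ | ∃ A : Finset ι, (∃ g : G, g ≠ 1 ∧ ∀ i ∈ A, g ∈ Gs i) ∧ A.card = c}
      #(indicesContaining Gs x) := by
  set T := {c : ℕ | ∃ A : Finset ι, (∃ g : G, g ≠ 1 ∧ ∀ i ∈ A, g ∈ Gs i) ∧ A.card = c}
  have hne : T.Nonempty := by
    obtain ⟨g, hg⟩ := exists_ne (1 : G)
    exact ⟨0, ∅, ⟨g, hg, by simp⟩, rfl⟩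
  have hbdd : BddAbove T := ⟨Fintype.card ι, by rintro _ ⟨A, -, rfl⟩; exact card_le_univ A⟩
  obtain ⟨A, ⟨x, hx, hA⟩, hcard⟩ := Nat.sSup_mem hne hbdd
  have hle : sSup T ≤ #(indicesContaining Gs x) :=
    hcard ▸ card_le_card fun i hi => mem_filter.2 ⟨mem_univ i, hA i hi⟩
  exact ⟨x, hx, card_indicesContaining_mem Gs hx, fun c hc => (le_csSup hbdd hc).trans hle⟩

end CosetCode

theorem stmt_10_general {G : Type*} [CommGroup G] [Nontrivial G] {n : ℕ}
    (Gs : Fin n → Subgroup G) (h : ⨅ i, Gs i = ⊥) :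
    sInf {d : ℕ | ∃ g g' : G,
        (fun i => (QuotientGroup.mk g : G ⧸ Gs i)) ≠ (fun i => (QuotientGroup.mk g' : G ⧸ Gs i)) ∧
        hammingDist (fun i => (QuotientGroup.mk g : G ⧸ Gs i))
          (fun i => (QuotientGroup.mk g' : G ⧸ Gs i)) = d}
      = n - sSup {c : ℕ | ∃ A : Finset (Fin n),
          (∃ g : G, g ≠ 1 ∧ ∀ i ∈ A, g ∈ Gs i) ∧ A.card = c} := by
  obtain ⟨x, hx, hgreatest⟩ := exists_isGreatest_card_indicesContaining Gs
  have hinj := mk_injective_of_iInf_eq_bot Gs h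
  have hleast : IsLeast {d : ℕ | ∃ g g' : G,
      (fun i => (QuotientGroup.mk g : G ⧸ Gs i)) ≠ (fun i => (QuotientGroup.mk g' : G ⧸ Gs i)) ∧
      hammingDist (fun i => (QuotientGroup.mk g : G ⧸ Gs i))
        (fun i => (QuotientGroup.mk g' : G ⧸ Gs i)) = d} (n - #(indicesContaining Gs x)) := by
    refine ⟨⟨1, x, hinj.ne hx.symm, ?_⟩, ?_⟩
    · rw [hammingDist_mk_mk, Fintype.card_fin, inv_one, one_mul]
    · rintro _ ⟨g, g', hne, rfl⟩
      have hdiff : g⁻¹ * g' ≠ 1 := fun h1 => hne (by rw [inv_mul_eq_one.1 h1])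
      rw [hammingDist_mk_mk, Fintype.card_fin]
      exact Nat.sub_le_sub_left (hgreatest.2 (card_indicesContaining_mem Gs hdiff)) n
  rw [hleast.csInf_eq, hgreatest.csSup_eq]

theorem stmt_10 {G : Type*} [CommGroup G] [Finite G] [Nontrivial G] {n : ℕ}
    (Gs : Fin n → Subgroup G) (h : ⨅ i, Gs i = ⊥) :
    sInf {d : ℕ | ∃ g g' : G,
        (fun i => (QuotientGroup.mk g : G ⧸ Gs i)) ≠ (fun i => (QuotientGroup.mk g' : G ⧸ Gs i)) ∧
        hammingDist (fun i => (QuotientGroup.mk g : G ⧸ Gs i))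
          (fun i => (QuotientGroup.mk g' : G ⧸ Gs i)) = d}
      = n - sSup {c : ℕ | ∃ A : Finset (Fin n),
          (∃ g : G, g ≠ 1 ∧ ∀ i ∈ A, g ∈ Gs i) ∧ A.card = c} :=
  stmt_10_general Gs h
end

section
/- Let G be a finite nontrivial group and G i (i : Fin n) a family of normal subgroups with ⨅ i, G i = ⊥. Then the minimum Hamming distance of the quasi-uniform code C = Set.range φ, namely sInf {d : ℕ | ∃ g g' : G, φ g ≠ φ g' ∧ hammingDist (φ g) (φ g') = d}, equals n - sSup {A.card | A : Finset (Fin n), ∃ g : G, g ≠ 1 ∧ ∀ i ∈ A, g ∈ G i}, and it also equals the minimum weight sInf {w : ℕ | ∃ g : G, g ≠ 1 ∧ w = (Finset.univ.filter (fun i => g ∉ G i)).card}. -/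
attribute [local instance] Classical.propDecidable

/-!
The distance between the codewords of `g` and `g'` is the number of coordinates `i` with
`g⁻¹ * g' ∉ G i`, i.e. the weight of `g⁻¹ * g'`; since `⨅ i, G i = ⊥` the encoding is injective, so
the minimum distance is the minimum weight over `g ≠ 1`. The weight of `g` is `n` minus the size of
`{i | g ∈ G i}`, so minimising the weight is maximising the set of subgroups containing `g`, and
every `A` with `g ∈ G i` for all `i ∈ A` lies inside that set.
-/

open Finset

section CardComplement

variable {α ι : Type*} [Fintype ι]

lemma sInf_card_filter_not_eq_sub_sSup (p : α → Prop) (hp : ∃ a, p a) (r : α → ι → Prop) :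
    sInf {w : ℕ | ∃ a, p a ∧ w = #{i | ¬ r a i}}
      = Fintype.card ι - sSup {c : ℕ | ∃ A : Finset ι, (∃ a, p a ∧ ∀ i ∈ A, r a i) ∧ #A = c} := by
  set Cs := {c : ℕ | ∃ A : Finset ι, (∃ a, p a ∧ ∀ i ∈ A, r a i) ∧ #A = c}
  have card_zeroSet_mem (a : α) (ha : p a) : #{i | r a i} ∈ Cs :=
    ⟨_, ⟨a, ha, fun i hi => (mem_filter.mp hi).2⟩, rfl⟩
  have hbdd : BddAbove Cs := ⟨Fintype.card ι, by rintro c ⟨A, _, rfl⟩; exact A.card_le_univ⟩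
  obtain ⟨a₀, ha₀⟩ := hp
  obtain ⟨A, ⟨a, ha, hA⟩, hcard⟩ := Nat.sSup_mem ⟨_, card_zeroSet_mem a₀ ha₀⟩ hbdd
  have card_le (b : α) (hb : p b) : #{i | r b i} ≤ sSup Cs := le_csSup hbdd (card_zeroSet_mem b hb)
  have card_max : #{i | r a i} = sSup Cs :=
    (card_le a ha).antisymm (hcard ▸ card_le_card fun i hi => mem_filter.mpr ⟨mem_univ i, hA i hi⟩)
  have card_filter_not (b : α) : #{i | ¬ r b i} = Fintype.card ι - #{i | r b i} := by
    rw [filter_not, card_sdiff_of_subset (filter_subset _ _), card_univ]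
  refine le_antisymm (Nat.sInf_le ⟨a, ha, by rw [card_filter_not, card_max]⟩) ?_
  refine le_csInf ⟨_, a₀, ha₀, rfl⟩ ?_
  rintro w ⟨b, hb, rfl⟩
  rw [card_filter_not]
  exact Nat.sub_le_sub_left (card_le b hb) _

end CardComplement

section CosetCode

variable {G ι : Type*} [Group G]

lemma injective_mk_pi {Gs : ι → Subgroup G} (h : ⨅ i, Gs i = ⊥) :
    Function.Injective fun (g : G) i => (g : G ⧸ Gs i) := by
  intro g g' he
  have hmem : g⁻¹ * g' ∈ ⨅ i, Gs i :=
    Subgroup.mem_iInf.mpr fun i => QuotientGroup.eq.mp (congrFun he i)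
  rw [h, Subgroup.mem_bot] at hmem
  exact inv_mul_eq_one.mp hmem

lemma hammingDist_mk_pi [Fintype ι] (Gs : ι → Subgroup G) (g g' : G) :
    hammingDist (fun i => (g : G ⧸ Gs i)) (fun i => (g' : G ⧸ Gs i))
      = #{i | g⁻¹ * g' ∉ Gs i} := by
  simp only [hammingDist, ne_eq, QuotientGroup.eq]

lemma setOf_hammingDist_mk_pi_eq_setOf_weight [Fintype ι] {Gs : ι → Subgroup G} (h : ⨅ i, Gs i = ⊥) :
    {d : ℕ | ∃ g g' : G, (fun i => (g : G ⧸ Gs i)) ≠ (fun i => (g' : G ⧸ Gs i)) ∧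
        hammingDist (fun i => (g : G ⧸ Gs i)) (fun i => (g' : G ⧸ Gs i)) = d}
      = {w : ℕ | ∃ g : G, g ≠ 1 ∧ w = #{i | g ∉ Gs i}} := by
  ext d
  constructor
  · rintro ⟨g, g', hne, rfl⟩
    refine ⟨g⁻¹ * g', fun h1 => hne ?_, hammingDist_mk_pi Gs g g'⟩
    rw [inv_mul_eq_one.mp h1]
  · rintro ⟨g, hg, rfl⟩
    refine ⟨1, g, fun he => hg (injective_mk_pi h he).symm, ?_⟩
    rw [hammingDist_mk_pi, inv_one, one_mul]

end CosetCode

theorem stmt_11_general {G : Type*} [Group G] [Nontrivial G] {n : ℕ}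
    (Gs : Fin n → Subgroup G) (h : ⨅ i, Gs i = ⊥) :
    sInf {d : ℕ | ∃ g g' : G,
        (fun i => (QuotientGroup.mk g : G ⧸ Gs i)) ≠ (fun i => (QuotientGroup.mk g' : G ⧸ Gs i)) ∧
        hammingDist (fun i => (QuotientGroup.mk g : G ⧸ Gs i))
          (fun i => (QuotientGroup.mk g' : G ⧸ Gs i)) = d}
      = n - sSup {c : ℕ | ∃ A : Finset (Fin n),
          (∃ g : G, g ≠ 1 ∧ ∀ i ∈ A, g ∈ Gs i) ∧ A.card = c} ∧
    sInf {d : ℕ | ∃ g g' : G,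
        (fun i => (QuotientGroup.mk g : G ⧸ Gs i)) ≠ (fun i => (QuotientGroup.mk g' : G ⧸ Gs i)) ∧
        hammingDist (fun i => (QuotientGroup.mk g : G ⧸ Gs i))
          (fun i => (QuotientGroup.mk g' : G ⧸ Gs i)) = d}
      = sInf {w : ℕ | ∃ g : G, g ≠ 1 ∧
          w = (Finset.univ.filter (fun i => g ∉ Gs i)).card} := by
  rw [setOf_hammingDist_mk_pi_eq_setOf_weight h]
  refine ⟨?_, rfl⟩
  simpa using sInf_card_filter_not_eq_sub_sSup (· ≠ (1 : G)) (exists_ne 1) fun g i => g ∈ Gs i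

theorem stmt_11 {G : Type*} [Group G] [Finite G] [Nontrivial G] {n : ℕ}
    (Gs : Fin n → Subgroup G) [∀ i, (Gs i).Normal] (h : ⨅ i, Gs i = ⊥) :
    sInf {d : ℕ | ∃ g g' : G,
        (fun i => (QuotientGroup.mk g : G ⧸ Gs i)) ≠ (fun i => (QuotientGroup.mk g' : G ⧸ Gs i)) ∧
        hammingDist (fun i => (QuotientGroup.mk g : G ⧸ Gs i))
          (fun i => (QuotientGroup.mk g' : G ⧸ Gs i)) = d}
      = n - sSup {c : ℕ | ∃ A : Finset (Fin n),
          (∃ g : G, g ≠ 1 ∧ ∀ i ∈ A, g ∈ Gs i) ∧ A.card = c} ∧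
    sInf {d : ℕ | ∃ g g' : G,
        (fun i => (QuotientGroup.mk g : G ⧸ Gs i)) ≠ (fun i => (QuotientGroup.mk g' : G ⧸ Gs i)) ∧
        hammingDist (fun i => (QuotientGroup.mk g : G ⧸ Gs i))
          (fun i => (QuotientGroup.mk g' : G ⧸ Gs i)) = d}
      = sInf {w : ℕ | ∃ g : G, g ≠ 1 ∧
          w = (Finset.univ.filter (fun i => g ∉ Gs i)).card} :=
  stmt_11_general Gs h
end

section
/- Let p be a prime and G i (i : Fin (p+1)) the subgroups of ZMod p × ZMod p given by G i = Subgroup.zpowers (1, (i : ZMod p)) when (i : ℕ) < p and G i = Subgroup.zpowers (0, 1) otherwise. Then the quasi-uniform code C = Set.range φ (where φ(g) = (QuotientGroup.mk g : (ZMod p × ZMod p) ⧸ G i)_i) has Nat.card C = p², and its minimum Hamming distance sInf {d : ℕ | ∃ g g', φ g ≠ φ g' ∧ hammingDist (φ g) (φ g') = d} equals p. -/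
attribute [local instance] Classical.propDecidable

/-!
The p + 1 subgroups are the p + 1 lines through the origin of the plane 𝔽ₚ², and every nonzero
vector lies on exactly one of them. For a family of subgroups with this property the coordinates
at which the codewords of g and g' agree are exactly the indices i with g' - g ∈ Gᵢ, so two
distinct elements disagree at all but one index: the map is injective and every nonzero distance
equals (p + 1) - 1 = p.
-/

open Finset

namespace QuasiUniformCode

variable {A ι : Type*} [AddCommGroup A] [Fintype ι] (G : ι → AddSubgroup A)

theorem hammingDist_mk_mk (g g' : A) :
    hammingDist (fun i => (g : A ⧸ G i)) (fun i => (g' : A ⧸ G i)) = #{i | -g + g' ∉ G i} := by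
  simp only [hammingDist, Ne, QuotientAddGroup.eq]

variable {G}

theorem hammingDist_mk_mk_of_existsUnique (hG : ∀ x ≠ 0, ∃! i, x ∈ G i) {g g' : A}
    (hne : g ≠ g') :
    hammingDist (fun i => (g : A ⧸ G i)) (fun i => (g' : A ⧸ G i)) = Fintype.card ι - 1 := by
  obtain ⟨i₀, hi₀, huniq⟩ := hG (-g + g') (by rwa [Ne, neg_add_eq_zero])
  have hdisagree : ({i | -g + g' ∉ G i} : Finset ι) = univ.erase i₀ := by
    ext i
    simp only [mem_filter, mem_univ, true_and, mem_erase, and_true]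
    exact ⟨fun h hi => h (hi ▸ hi₀), fun h hi => h (huniq i hi)⟩
  rw [hammingDist_mk_mk, hdisagree, card_erase_of_mem (mem_univ _), card_univ]

theorem mk_injective_of_existsUnique (hG : ∀ x ≠ 0, ∃! i, x ∈ G i)
    (hι : 1 < Fintype.card ι) :
    Function.Injective (fun g : A => fun i => (g : A ⧸ G i)) := by
  intro g g' (h : (fun i => (g : A ⧸ G i)) = fun i => (g' : A ⧸ G i))
  by_contra hne
  have hdist := hammingDist_mk_mk_of_existsUnique hG hne
  rw [h, hammingDist_self] at hdist
  omega

theorem sInf_hammingDist_eq_of_existsUnique [Nontrivial A] (hG : ∀ x ≠ 0, ∃! i, x ∈ G i)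
    (hι : 1 < Fintype.card ι) :
    sInf {d : ℕ | ∃ g g' : A, (fun i => (g : A ⧸ G i)) ≠ (fun i => (g' : A ⧸ G i)) ∧
      hammingDist (fun i => (g : A ⧸ G i)) (fun i => (g' : A ⧸ G i)) = d} =
      Fintype.card ι - 1 := by
  refine (congrArg sInf ?_).trans (csInf_singleton _)
  ext d
  constructor
  · rintro ⟨g, g', hne, rfl⟩
    exact hammingDist_mk_mk_of_existsUnique hG fun h => hne (h ▸ rfl)
  · rintro rfl
    obtain ⟨g, g', hne⟩ := exists_pair_ne A
    exact ⟨g, g', (mk_injective_of_existsUnique hG hι).ne hne,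
      hammingDist_mk_mk_of_existsUnique hG hne⟩

end QuasiUniformCode

namespace ZMod

variable {n : ℕ}

theorem mem_zmultiples_iff_exists_smul {M : Type*} [AddCommGroup M]
    [Module (ZMod n) M] {v x : M} : x ∈ AddSubgroup.zmultiples v ↔ ∃ k : ZMod n, k • v = x := by
  rw [AddSubgroup.mem_zmultiples_iff]
  constructor
  · rintro ⟨k, rfl⟩
    exact ⟨k, Int.cast_smul_eq_zsmul (ZMod n) k v⟩
  · rintro ⟨k, rfl⟩
    refine ⟨k.cast, ?_⟩
    rw [← Int.cast_smul_eq_zsmul (ZMod n), ZMod.intCast_zmod_cast]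

theorem mem_zmultiples_one_mk_iff (c : ZMod n) (x : ZMod n × ZMod n) :
    x ∈ AddSubgroup.zmultiples ((1 : ZMod n), c) ↔ x.2 = x.1 * c := by
  rw [mem_zmultiples_iff_exists_smul (n := n)]
  constructor
  · rintro ⟨k, rfl⟩
    simp
  · intro h
    exact ⟨x.1, by ext <;> simp [h]⟩

theorem mem_zmultiples_zero_one_iff (x : ZMod n × ZMod n) :
    x ∈ AddSubgroup.zmultiples ((0 : ZMod n), (1 : ZMod n)) ↔ x.1 = 0 := by
  rw [mem_zmultiples_iff_exists_smul (n := n)]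
  constructor
  · rintro ⟨k, rfl⟩
    simp
  · intro h
    exact ⟨x.2, by ext <;> simp [h]⟩

end ZMod

def projLine (p : ℕ) (i : Fin (p + 1)) : AddSubgroup (ZMod p × ZMod p) :=
  if (i : ℕ) < p then AddSubgroup.zmultiples ((1 : ZMod p), ((i : ℕ) : ZMod p))
  else AddSubgroup.zmultiples ((0 : ZMod p), (1 : ZMod p))

theorem projLine_castSucc {p : ℕ} (k : Fin p) :
    projLine p k.castSucc = AddSubgroup.zmultiples ((1 : ZMod p), ((k : ℕ) : ZMod p)) :=
  if_pos k.isLt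

theorem projLine_last (p : ℕ) :
    projLine p (Fin.last p) = AddSubgroup.zmultiples ((0 : ZMod p), (1 : ZMod p)) :=
  if_neg (lt_irrefl p)

theorem existsUnique_mem_projLine {p : ℕ} [Fact p.Prime] {x : ZMod p × ZMod p} (hx : x ≠ 0) :
    ∃! i, x ∈ projLine p i := by
  obtain ⟨a, b⟩ := x
  by_cases ha : a = 0
  · subst ha
    have hb : b ≠ 0 := fun hb => hx (by rw [hb]; rfl)
    refine ⟨Fin.last p, by simp [projLine_last, ZMod.mem_zmultiples_zero_one_iff], ?_⟩
    intro j hj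
    induction j using Fin.lastCases with
    | last => rfl
    | cast k =>
      rw [projLine_castSucc, ZMod.mem_zmultiples_one_mk_iff, zero_mul] at hj
      exact absurd hj hb
  · refine ⟨Fin.castSucc ⟨(b / a).val, ZMod.val_lt _⟩, ?_, ?_⟩
    · change (a, b) ∈ projLine p _
      rw [projLine_castSucc, ZMod.mem_zmultiples_one_mk_iff, ZMod.natCast_zmod_val,
        mul_div_cancel₀ _ ha]
    · intro j hj
      induction j using Fin.lastCases with
      | last =>
        rw [projLine_last, ZMod.mem_zmultiples_zero_one_iff] at hj
        exact absurd hj ha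
      | cast k =>
        rw [projLine_castSucc, ZMod.mem_zmultiples_one_mk_iff] at hj
        have hk : ((k : ℕ) : ZMod p) = b / a := by
          rw [show b = a * (k : ℕ) from hj, mul_div_cancel_left₀ _ ha]
        simp only [← hk, ZMod.val_cast_of_lt k.isLt]

open QuasiUniformCode in
theorem stmt_13 (p : ℕ) [Fact p.Prime]
    (Gs : Fin (p + 1) → AddSubgroup (ZMod p × ZMod p))
    (hGs : ∀ i, Gs i = if (i : ℕ) < p
        then AddSubgroup.zmultiples ((1 : ZMod p), ((i : ℕ) : ZMod p))
        else AddSubgroup.zmultiples ((0 : ZMod p), (1 : ZMod p))) :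
    Nat.card (Set.range (fun g : ZMod p × ZMod p =>
        fun i => (QuotientAddGroup.mk g : (ZMod p × ZMod p) ⧸ Gs i))) = p ^ 2 ∧
    sInf {d : ℕ | ∃ g g' : ZMod p × ZMod p,
        (fun i => (QuotientAddGroup.mk g : (ZMod p × ZMod p) ⧸ Gs i))
          ≠ (fun i => (QuotientAddGroup.mk g' : (ZMod p × ZMod p) ⧸ Gs i)) ∧
        hammingDist (fun i => (QuotientAddGroup.mk g : (ZMod p × ZMod p) ⧸ Gs i))
          (fun i => (QuotientAddGroup.mk g' : (ZMod p × ZMod p) ⧸ Gs i)) = d} = p := by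
  obtain rfl : Gs = projLine p := funext hGs
  have hG : ∀ x ≠ 0, ∃! i, x ∈ projLine p i := fun _ => existsUnique_mem_projLine
  have hcard : 1 < Fintype.card (Fin (p + 1)) := by
    simpa using (Fact.out : p.Prime).pos
  constructor
  · rw [Nat.card_range_of_injective (mk_injective_of_existsUnique hG hcard), Nat.card_prod,
      Nat.card_zmod, sq]
  · rw [sInf_hammingDist_eq_of_existsUnique hG hcard, Fintype.card_fin, Nat.add_sub_cancel]
end

section
/- Let p be a prime, G a finite p-group (Nat.card G = p ^ m for some m), and G i (i : Fin n) a family of subgroups each of index p ((G i).index = p). Then the quasi-uniform code obtained from G and the G i is almost affine: for every A : Finset (Fin n), there exists k : ℕ such that Nat.card (Set.range (fun g : G => fun i : A => (QuotientGroup.mk g : G ⧸ G (↑i)))) = p ^ k. -/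
theorem Subgroup.card_range_quotient_mk_pi_eq_index_iInf {G ι : Type*} [Group G]
    (H : ι → Subgroup G) :
    Nat.card (Set.range fun g : G => fun i => (g : G ⧸ H i)) = (⨅ i, H i).index := by
  have hrange : (Set.range fun g : G => fun i => (g : G ⧸ H i)) =
      Set.range (Subgroup.quotientiInfEmbedding H) := by
    rw [← QuotientGroup.mk_surjective.range_comp]
    rfl
  rw [hrange, Nat.card_range_of_injective (Subgroup.quotientiInfEmbedding H).injective]
  rfl

theorem stmt_14_general (p : ℕ) (hp : p.Prime) {G : Type*} [Group G] [Finite G]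
    (hG : ∃ m : ℕ, Nat.card G = p ^ m) {n : ℕ} (Gs : Fin n → Subgroup G)
    (A : Finset (Fin n)) :
    ∃ k : ℕ, Nat.card (Set.range (fun g : G =>
        fun i : A => (QuotientGroup.mk g : G ⧸ Gs (↑i)))) = p ^ k := by
  obtain ⟨m, hm⟩ := hG
  have : Fact p.Prime := ⟨hp⟩
  rw [Subgroup.card_range_quotient_mk_pi_eq_index_iInf fun i : A => Gs i]
  exact (IsPGroup.of_card hm).index _

theorem stmt_14 (p : ℕ) (hp : p.Prime) {G : Type*} [Group G] [Finite G]
    (hG : ∃ m : ℕ, Nat.card G = p ^ m) {n : ℕ} (Gs : Fin n → Subgroup G)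
    (hGs : ∀ i, (Gs i).index = p) (A : Finset (Fin n)) :
    ∃ k : ℕ, Nat.card (Set.range (fun g : G =>
        fun i : A => (QuotientGroup.mk g : G ⧸ Gs (↑i)))) = p ^ k :=
  stmt_14_general p hp hG Gs A
end

section
/- Let G be a finite group that is not nilpotent. Then there exist n : ℕ and a family of subgroups G i (i : Fin n) of G such that no finite abelian group represents (G, (G i)): for every finite commutative group A and every family of subgroups A i (i : Fin n) of A, there exists a nonempty S : Finset (Fin n) with (⨅ i ∈ S, G i).index ≠ (⨅ i ∈ S, A i).index. -/
/-!
A finite group is nilpotent iff all its Sylow subgroups are normal, so `G` has two distinct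
Sylow `p`-subgroups `P` and `Q`. Both have index prime to `p`, whereas `p ∣ [G : P ⊓ Q]`.
In an abelian group every subgroup is normal, so `[A : A₁ ⊓ A₂] ∣ [A : A₁] [A : A₂]`,
and two subgroups of index prime to `p` meet in a subgroup of index prime to `p`.
-/

universe u

theorem Subgroup.index_inf_dvd_of_normal {G : Type*} [Group G] (H K : Subgroup G) [K.Normal] :
    (H ⊓ K).index ∣ H.index * K.index := by
  rw [← relIndex_mul_index inf_le_left, inf_relIndex_left, mul_comm H.index]
  exact mul_dvd_mul_right (relIndex_dvd_index_of_normal K H) _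

theorem Nat.Prime.not_dvd_index_inf {A : Type*} [CommGroup A] {p : ℕ} (hp : p.Prime)
    {H K : Subgroup A} (hH : ¬ p ∣ H.index) (hK : ¬ p ∣ K.index) : ¬ p ∣ (H ⊓ K).index :=
  fun h ↦ (hp.dvd_mul.mp (h.trans (H.index_inf_dvd_of_normal K))).elim hH hK

namespace Sylow

variable {p : ℕ} {G : Type*} [Group G] [Fact p.Prime]

/-- Otherwise `P ⊓ Q` would itself be a Sylow subgroup, contained in both `P` and `Q`. -/
theorem dvd_index_inf_of_ne {P Q : Sylow p G} (hPQ : P ≠ Q) :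
    p ∣ ((P : Subgroup G) ⊓ Q).index := by
  by_contra hndvd
  let R := (P.isPGroup'.to_le inf_le_left).toSylow hndvd
  have hP : (P : Subgroup G) = R := R.is_maximal' P.isPGroup' inf_le_left
  have hQ : (Q : Subgroup G) = R := R.is_maximal' Q.isPGroup' inf_le_right
  exact hPQ (Sylow.ext (hP.trans hQ.symm))

end Sylow

theorem Group.exists_sylow_ne_of_not_isNilpotent {G : Type*} [Group G] [Finite G]
    (hG : ¬ Group.IsNilpotent G) :
    ∃ (p : ℕ) (_ : Fact p.Prime) (P Q : Sylow p G), P ≠ Q := by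
  have hNormal := (isNilpotent_of_finite_tfae (G := G)).out 0 3
  obtain ⟨p, hp, P, hP⟩ :
      ∃ (p : ℕ) (_ : Fact p.Prime) (P : Sylow p G), ¬ (P : Subgroup G).Normal := by
    simpa [hNormal] using hG
  by_contra! h
  have : Subsingleton (Sylow p G) := ⟨h p hp⟩
  exact hP P.normal_of_subsingleton

theorem stmt_15 {G : Type*} [Group G] [Finite G] (hG : ¬ Group.IsNilpotent G) :
    ∃ (n : ℕ) (Gs : Fin n → Subgroup G),
      ∀ (A : Type u) [CommGroup A] [Finite A] (As : Fin n → Subgroup A),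
        ∃ S : Finset (Fin n), S.Nonempty ∧
          (⨅ i ∈ S, Gs i).index ≠ (⨅ i ∈ S, As i).index := by
  obtain ⟨p, hp, P, Q, hPQ⟩ := Group.exists_sylow_ne_of_not_isNilpotent hG
  refine ⟨2, ![P, Q], fun A _ _ As ↦ ?_⟩
  by_contra! hAs
  have h₀ := hAs {0} (by simp)
  have h₁ := hAs {1} (by simp)
  have h₀₁ := hAs {0, 1} (by simp)
  simp only [Finset.iInf_singleton, Finset.iInf_insert, Matrix.cons_val_zero,
    Matrix.cons_val_one] at h₀ h₁ h₀₁
  exact hp.out.not_dvd_index_inf (h₀ ▸ P.not_dvd_index) (h₁ ▸ Q.not_dvd_index)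
    (h₀₁ ▸ Sylow.dvd_index_inf_of_ne hPQ)
end

section
/- Let G be a finite group with subgroups G i (i : Fin n) and A a finite group with subgroups A i (i : Fin n), with Nat.card G = Nat.card A. If for every nonempty S : Finset (Fin n) the indices agree, (⨅ i ∈ S, G i).index = (⨅ i ∈ S, A i).index, then for every r : ℕ the number of group elements of weight r agree: Nat.card {g : G | (Finset.univ.filter (fun i => g ∉ G i)).card = r} = Nat.card {a : A | (Finset.univ.filter (fun i => a ∉ A i)).card = r}. -/
attribute [local instance] Classical.propDecidable

/-! Let `S g` be the set of indices `i` with `g ∉ G i`, so that the weight of `g` is `#(S g)`.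
For `T ⊆ Fin n`, the elements with `S g ⊆ T` form the subgroup `⨅ i ∉ T, G i`, whose order
`|G| / index` is the same on the side of `A`. These sublevel counts determine, by Möbius
inversion on the subset lattice, how many elements have `S g = U` for each `U`, and hence the
weight distribution. -/

open Finset

section FiberCounting

variable {ι α β : Type*} [DecidableEq ι] [Fintype α] [Fintype β]

theorem card_subset_eq_card_fiber_add_card_ssubset (f : α → Finset ι) (T : Finset ι) :
    #{a | f a ⊆ T} = #{a | f a = T} + #{a | f a ⊂ T} := by
  rw [← card_union_of_disjoint (disjoint_filter.2 fun _ _ h => h ▸ lt_irrefl _), ← filter_or]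
  exact congrArg card (filter_congr fun a _ => le_iff_eq_or_lt)

variable [Fintype ι]

theorem card_filter_comp_eq_sum_card_fiber (f : α → Finset ι) (p : Finset ι → Prop)
    [DecidablePred p] : #{a | p (f a)} = ∑ U with p U, #{a | f a = U} := by
  rw [card_eq_sum_card_fiberwise (f := f) (t := {U | p U}) fun a ha => by simpa using ha]
  refine sum_congr rfl fun U hU => congrArg card (filter_filter _ _ _ |>.trans ?_)
  exact filter_congr fun a _ => by simp_all

theorem card_fiber_eq_of_card_subset_eq {f : α → Finset ι} {g : β → Finset ι}
    (h : ∀ T, #{a | f a ⊆ T} = #{b | g b ⊆ T}) (U : Finset ι) :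
    #{a | f a = U} = #{b | g b = U} := by
  induction U using Finset.strongInduction with
  | H U ih =>
    have hlower : #{a | f a ⊂ U} = #{b | g b ⊂ U} := by
      rw [card_filter_comp_eq_sum_card_fiber f (· ⊂ U),
        card_filter_comp_eq_sum_card_fiber g (· ⊂ U)]
      exact sum_congr rfl fun V hV => ih V (mem_filter.1 hV).2
    have := h U
    rw [card_subset_eq_card_fiber_add_card_ssubset, card_subset_eq_card_fiber_add_card_ssubset,
      hlower] at this
    exact Nat.add_right_cancel this

theorem card_filter_comp_eq_of_card_subset_eq {f : α → Finset ι} {g : β → Finset ι}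
    (h : ∀ T, #{a | f a ⊆ T} = #{b | g b ⊆ T}) (p : Finset ι → Prop) [DecidablePred p] :
    #{a | p (f a)} = #{b | p (g b)} := by
  rw [card_filter_comp_eq_sum_card_fiber, card_filter_comp_eq_sum_card_fiber]
  exact sum_congr rfl fun U _ => card_fiber_eq_of_card_subset_eq h U

end FiberCounting

section Subgroup

variable {G A ι : Type*} [Group G] [Group A]

theorem Subgroup.card_biInf_eq_of_index_biInf_eq [Finite A] {Gs : ι → Subgroup G}
    {As : ι → Subgroup A} (hcard : Nat.card G = Nat.card A)
    (hidx : ∀ S : Finset ι, S.Nonempty → (⨅ i ∈ S, Gs i).index = (⨅ i ∈ S, As i).index)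
    (T : Finset ι) :
    Nat.card (⨅ i ∈ T, Gs i : Subgroup G) = Nat.card (⨅ i ∈ T, As i : Subgroup A) := by
  have hidxT : (⨅ i ∈ T, Gs i).index = (⨅ i ∈ T, As i).index := by
    rcases T.eq_empty_or_nonempty with rfl | hT
    · simp
    · exact hidx T hT
  have h := (⨅ i ∈ T, Gs i).index_mul_card
  rw [hidxT, hcard, ← (⨅ i ∈ T, As i).index_mul_card] at h
  exact Nat.eq_of_mul_eq_mul_left (Nat.pos_of_ne_zero index_ne_zero_of_finite) h

theorem card_filter_subset_eq_card_biInf_compl [Fintype G] [Fintype ι] [DecidableEq ι]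
    (Gs : ι → Subgroup G) (T : Finset ι) :
    #{g | ({i | g ∉ Gs i} : Finset ι) ⊆ T} = Nat.card (⨅ i ∈ Tᶜ, Gs i : Subgroup G) := by
  rw [Nat.card_eq_fintype_card, Fintype.card_subtype]
  refine congrArg card (filter_congr fun g _ => ?_)
  simp [Subgroup.mem_iInf, subset_iff, not_imp_comm]

end Subgroup

theorem stmt_17 {G A : Type*} [Group G] [Finite G] [Group A] [Finite A]
    {n : ℕ} (Gs : Fin n → Subgroup G) (As : Fin n → Subgroup A)
    (hcard : Nat.card G = Nat.card A)
    (hidx : ∀ S : Finset (Fin n), S.Nonempty →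
      (⨅ i ∈ S, Gs i).index = (⨅ i ∈ S, As i).index)
    (r : ℕ) :
    Nat.card {g : G | (Finset.univ.filter (fun i => g ∉ Gs i)).card = r}
      = Nat.card {a : A | (Finset.univ.filter (fun i => a ∉ As i)).card = r} := by
  have := Fintype.ofFinite G
  have := Fintype.ofFinite A
  have hsublevel : ∀ T : Finset (Fin n),
      #{g : G | ({i | g ∉ Gs i} : Finset _) ⊆ T} =
        #{a : A | ({i | a ∉ As i} : Finset _) ⊆ T} := by
    intro T
    rw [card_filter_subset_eq_card_biInf_compl, card_filter_subset_eq_card_biInf_compl,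
      Subgroup.card_biInf_eq_of_index_biInf_eq hcard hidx]
  simpa only [Nat.card_eq_fintype_card, Fintype.card_subtype, Set.coe_ofPred, Set.mem_ofPred_eq]
    using card_filter_comp_eq_of_card_subset_eq hsublevel (#· = r)
end

section
/- Let G be a finite group and G i (i : Fin n) a family of subgroups, and let C = Set.range φ be the quasi-uniform code, where φ(g) = (QuotientGroup.mk g : G ⧸ G i)_i. Then the distance profile of C is independent of the center: for every r : ℕ and all c, c' ∈ C, Nat.card {x ∈ C | hammingDist c x = r} = Nat.card {x ∈ C | hammingDist c' x = r}. -/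
/-!
The code is the orbit of the all-identity-cosets word under the diagonal left action of `G` on
`Π i, G ⧸ G i`. Translation by a fixed element is a bijection of that orbit and an isometry for
the Hamming distance, so it carries the Hamming sphere about `c` onto the sphere about `a • c`.
-/

attribute [local instance] Classical.propDecidable

open MulAction

theorem smul_mem_orbit_iff {G α : Type*} [Group G] [MulAction G α] (a : G) {x x₀ : α} :
    a • x ∈ orbit G x₀ ↔ x ∈ orbit G x₀ := by
  rw [mem_orbit_symm, orbit_smul, mem_orbit_symm]

section HammingOrbit

variable {G ι : Type*} [Group G] [Fintype ι] {β : ι → Type*} [∀ i, MulAction G (β i)]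
  [∀ i, DecidableEq (β i)]

theorem hammingDist_smul_smul (a : G) (x y : ∀ i, β i) :
    hammingDist (a • x) (a • y) = hammingDist x y :=
  hammingDist_comp (fun i => (a • · : β i → β i)) fun _ => MulAction.injective a

theorem card_hammingSphere_orbit_smul_center (x₀ c : ∀ i, β i) (a : G) (r : ℕ) :
    Nat.card {x ∈ orbit G x₀ | hammingDist (a • c) x = r}
      = Nat.card {x ∈ orbit G x₀ | hammingDist c x = r} := by
  refine (Nat.card_congr <| (MulAction.toPerm a).subtypeEquiv fun x => ?_).symm
  simp only [Set.mem_ofPred_eq, MulAction.toPerm_apply, smul_mem_orbit_iff,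
    hammingDist_smul_smul]

theorem card_hammingSphere_orbit_eq (x₀ : ∀ i, β i) {c c' : ∀ i, β i}
    (hc : c ∈ orbit G x₀) (hc' : c' ∈ orbit G x₀) (r : ℕ) :
    Nat.card {x ∈ orbit G x₀ | hammingDist c x = r}
      = Nat.card {x ∈ orbit G x₀ | hammingDist c' x = r} := by
  obtain ⟨⟨a, rfl⟩, ⟨a', rfl⟩⟩ := And.intro hc hc'
  rw [card_hammingSphere_orbit_smul_center, card_hammingSphere_orbit_smul_center]

end HammingOrbit

theorem range_mk_eq_orbit {G : Type*} [Group G] {ι : Type*} (Gs : ι → Subgroup G) :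
    Set.range (fun g : G => fun i => (QuotientGroup.mk g : G ⧸ Gs i))
      = orbit G (fun i => (QuotientGroup.mk 1 : G ⧸ Gs i)) := by
  ext x
  simp only [Set.mem_range, mem_orbit_iff, funext_iff, Pi.smul_apply,
    MulAction.Quotient.smul_mk, smul_eq_mul, mul_one]

theorem stmt_18_general {G : Type*} [Group G] {n : ℕ} (Gs : Fin n → Subgroup G)
    (r : ℕ) (c c' : ∀ i, G ⧸ Gs i)
    (hc : c ∈ Set.range (fun g : G => fun i => (QuotientGroup.mk g : G ⧸ Gs i)))
    (hc' : c' ∈ Set.range (fun g : G => fun i => (QuotientGroup.mk g : G ⧸ Gs i))) :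
    Nat.card {x ∈ Set.range (fun g : G => fun i => (QuotientGroup.mk g : G ⧸ Gs i)) |
        hammingDist c x = r}
      = Nat.card {x ∈ Set.range (fun g : G => fun i => (QuotientGroup.mk g : G ⧸ Gs i)) |
        hammingDist c' x = r} := by
  rw [range_mk_eq_orbit] at hc hc' ⊢
  exact card_hammingSphere_orbit_eq _ hc hc' r

theorem stmt_18 {G : Type*} [Group G] [Finite G] {n : ℕ} (Gs : Fin n → Subgroup G)
    (r : ℕ) (c c' : ∀ i, G ⧸ Gs i)
    (hc : c ∈ Set.range (fun g : G => fun i => (QuotientGroup.mk g : G ⧸ Gs i)))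
    (hc' : c' ∈ Set.range (fun g : G => fun i => (QuotientGroup.mk g : G ⧸ Gs i))) :
    Nat.card {x ∈ Set.range (fun g : G => fun i => (QuotientGroup.mk g : G ⧸ Gs i)) |
        hammingDist c x = r}
      = Nat.card {x ∈ Set.range (fun g : G => fun i => (QuotientGroup.mk g : G ⧸ Gs i)) |
        hammingDist c' x = r} :=
  stmt_18_general Gs r c c' hc hc'
end
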